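/- arXiv:1410.0905 — 3 statements merged into one kernel-verified Lean document; each statement's English description precedes it below -/
import Mathlib

section
/- For all a, b ∈ F one has v_a · u_b = (1−et)^{−(a+b)} in A[[t]], i.e. v_a · u_b = Σ_{r≥0} (1/r!) (a+b)^{⟨r⟩} e^r t^r. (This is the second identity of the paper's Lemma 1.6.) -/
/-- Falling factorial `x_a^{[m]} := (x+a)(x+a-1)⋯(x+a-m+1)` in an `F`-algebra `A`. -/
def fallPow {F A : Type*} [Field F] [Ring A] [Algebra F A] (x : A) (a : F) : ℕ → A
  | 0 => 1
  | m + 1 => fallPow x a m * (x + algebraMap F A (a - (m : F)))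

/-- Scalar rising factorial `c^{⟨m⟩} = c(c+1)⋯(c+m-1)` in `F`. -/
def riseC {F : Type*} [Field F] (c : F) (m : ℕ) : F :=
  ∏ i ∈ Finset.range m, (c + (i : F))

/-- `u_a = Σ_{r≥0} ((−1)^r/r!) h_{−a}^{[r]} e^r t^r ∈ A[[t]]`. -/
noncomputable def uSer {F A : Type*} [Field F] [Ring A] [Algebra F A] (h e : A) (a : F) :
    PowerSeries A :=
  PowerSeries.mk fun r => ((-1 : F) ^ r / (r.factorial : F)) • (fallPow h (-a) r * e ^ r)

/-- `v_a = Σ_{r≥0} (1/r!) h_a^{[r]} e^r t^r ∈ A[[t]]`. -/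
noncomputable def vSer {F A : Type*} [Field F] [Ring A] [Algebra F A] (h e : A) (a : F) :
    PowerSeries A :=
  PowerSeries.mk fun r => ((r.factorial : F))⁻¹ • (fallPow h a r * e ^ r)

section aux
variable {F A : Type*} [Field F] [Ring A] [Algebra F A]

lemma fallPow_succ_left (x : A) (c : F) (m : ℕ) :
    fallPow x c (m+1) = (x + algebraMap F A c) * fallPow x (c-1) m := by
  induction m with
  | zero => simp [fallPow]
  | succ m ih =>
      have harg : c - (((m:ℕ)+1 : ℕ):F) = (c-1) - (m:F) := by push_cast; ring
      calc fallPow x c (m+1+1)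
          = fallPow x c (m+1) * (x + algebraMap F A (c - (((m:ℕ)+1:ℕ):F))) := rfl
        _ = (x + algebraMap F A c) * (fallPow x (c-1) m * (x + algebraMap F A ((c-1) - (m:F)))) := by
            rw [ih, harg, mul_assoc]
        _ = (x + algebraMap F A c) * fallPow x (c-1) (m+1) := rfl

lemma e_mul_fallPow (h e : A) (he : h * e - e * h = e) (c : F) (m : ℕ) :
    e * fallPow h c m = fallPow h (c-1) m * e := by
  have heh : e * h = (h - 1) * e := by
    have h2 : h * e = e + e * h := sub_eq_iff_eq_add.mp he
    have h3 : e * h = h * e - e := by rw [h2]; abel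
    rw [h3, sub_mul, one_mul]
  induction m with
  | zero => simp [fallPow]
  | succ m ih =>
      have key : e * (h + algebraMap F A (c - (m:F)))
          = (h + algebraMap F A (c - 1 - (m:F))) * e := by
        rw [mul_add, heh, ← Algebra.commutes, ← add_mul]
        congr 1
        simp only [map_sub, map_one]
        abel
      rw [fallPow, ← mul_assoc, ih, mul_assoc, key, ← mul_assoc]
      rfl

lemma pow_mul_fallPow (h e : A) (he : h * e - e * h = e) (c : F) (i m : ℕ) :
    e ^ i * fallPow h c m = fallPow h (c - i) m * e ^ i := by
  induction i with
  | zero => simp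
  | succ i ih =>
      rw [pow_succ', mul_assoc, ih, ← mul_assoc, e_mul_fallPow h e he, mul_assoc, ← pow_succ',
        show c - (i:F) - 1 = c - (((i:ℕ)+1:ℕ):F) by push_cast; ring]

lemma riseC_succ' (c : F) (n : ℕ) : riseC c (n+1) = c * riseC (c+1) n := by
  rw [riseC, Finset.prod_range_succ', riseC]
  simp only [Nat.cast_zero, add_zero, Nat.cast_add, Nat.cast_one]
  rw [mul_comm]
  congr 1
  exact Finset.prod_congr rfl fun i _ => by push_cast; ring
end aux

lemma alt_sum {F : Type*} [Field F] {M : Type*} [AddCommGroup M] [Module F M]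
    (g : ℕ → M) (n : ℕ) :
    ∑ i ∈ Finset.range (n+2), ((-1:F)^i * ((n+1).choose i : F)) • g i
      = - ∑ i ∈ Finset.range (n+1), ((-1:F)^i * (n.choose i : F)) • (g (i+1) - g i) := by
  have h1 : ∑ i ∈ Finset.range (n+2), ((-1:F)^i * ((n+1).choose i : F)) • g i
      = (∑ i ∈ Finset.range (n+1), ((-1:F)^(i+1) * ((n+1).choose (i+1) : F)) • g (i+1)) + g 0 := by
    rw [Finset.sum_range_succ' (fun i => ((-1:F)^i * ((n+1).choose i : F)) • g i) (n+1)]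
    simp
  have h2 : ∑ i ∈ Finset.range (n+1), ((-1:F)^i * (n.choose i : F)) • g i
      = (∑ i ∈ Finset.range (n+1), ((-1:F)^(i+1) * (n.choose (i+1) : F)) • g (i+1)) + g 0 := by
    rw [Finset.sum_range_succ' (fun i => ((-1:F)^i * (n.choose i : F)) • g i) n,
        Finset.sum_range_succ (fun i => ((-1:F)^(i+1) * (n.choose (i+1) : F)) • g (i+1)) n]
    simp
  have h3 : ∀ i ∈ Finset.range (n+1), ((-1:F)^(i+1) * ((n+1).choose (i+1):F)) • g (i+1)
      = ((-1:F)^(i+1) * (n.choose (i+1):F)) • g (i+1) - ((-1:F)^i * (n.choose i:F)) • g (i+1) := by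
    intro i _
    rw [← sub_smul]
    congr 1
    rw [Nat.choose_succ_succ, Nat.cast_add]
    ring
  rw [h1, Finset.sum_congr rfl h3, Finset.sum_sub_distrib]
  simp only [smul_sub, Finset.sum_sub_distrib, h2]
  abel

lemma key_sum {F A : Type*} [Field F] [Ring A] [Algebra F A]
    (h e : A) (he : h * e - e * h = e) (a : F) :
    ∀ (n : ℕ) (b : F), ∑ i ∈ Finset.range (n+1), ((-1:F)^i * (n.choose i : F)) •
        (fallPow h a i * fallPow h (-b - i) (n-i))
      = ((-1:F)^n * riseC (a+b) n) • (1:A) := by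
  intro n
  induction n with
  | zero => intro b; simp [fallPow, riseC]
  | succ n ih =>
      intro b
      rw [show n+1+1 = n+2 from rfl,
        alt_sum (fun i => fallPow h a i * fallPow h (-b - (i:F)) (n+1-i)) n]
      have hdiff : ∀ i ∈ Finset.range (n+1),
          ((-1:F)^i * (n.choose i : F)) •
            ((fun i => fallPow h a i * fallPow h (-b - (i:F)) (n+1-i)) (i+1)
              - (fun i => fallPow h a i * fallPow h (-b - (i:F)) (n+1-i)) i)
          = (a+b) • (((-1:F)^i * (n.choose i : F)) •
              (fallPow h a i * fallPow h (-(b+1) - (i:F)) (n-i))) := by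
        intro i hi
        have hin : i ≤ n := Nat.lt_succ_iff.mp (Finset.mem_range.mp hi)
        simp only []
        have e1 : n+1-(i+1) = n-i := by omega
        have e2 : n+1-i = (n-i)+1 := by omega
        have e3 : (-b - ((i:ℕ)+1:ℕ) : F) = (-b - (i:F)) - 1 := by push_cast; ring
        rw [e1, e2, e3, fallPow_succ_left h (-b - (i:F)) (n-i)]
        have e4 : fallPow h a (i+1) = fallPow h a i * (h + algebraMap F A (a - i)) := rfl
        rw [e4, mul_assoc, ← mul_sub, ← sub_mul]
        have e5 : (h + algebraMap F A (a - (i:F))) - (h + algebraMap F A (-b - (i:F)))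
            = algebraMap F A (a + b) := by
          rw [add_sub_add_left_eq_sub, ← map_sub]
          congr 1
          ring
        rw [e5]
        have e6 : (-b - (i:F)) - 1 = -(b+1) - (i:F) := by ring
        rw [e6, ← Algebra.smul_def, mul_smul_comm, smul_comm]
      rw [Finset.sum_congr rfl hdiff, ← Finset.smul_sum, ih (b+1)]
      rw [smul_smul, ← neg_smul, riseC_succ' (a+b) n]
      congr 1
      ring

theorem vSer_mul_uSer' {F A : Type*} [Field F] [CharZero F] [Ring A] [Algebra F A]
    (h e : A) (he : h * e - e * h = e) (a b : F) :
    (PowerSeries.mk fun r => ((r.factorial : F))⁻¹ • (fallPow h a r * e ^ r)) *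
      (PowerSeries.mk fun r => ((-1 : F) ^ r / (r.factorial : F)) • (fallPow h (-b) r * e ^ r)) =
      PowerSeries.mk fun r => (((r.factorial : F))⁻¹ * riseC (a + b) r) • e ^ r := by
  ext n
  rw [PowerSeries.coeff_mul, Finset.Nat.sum_antidiagonal_eq_sum_range_succ_mk]
  simp only [PowerSeries.coeff_mk]
  have hterm : ∀ i ∈ Finset.range (n+1),
      ((i.factorial : F))⁻¹ • (fallPow h a i * e ^ i) *
        (((-1 : F) ^ (n-i) / ((n-i).factorial : F)) • (fallPow h (-b) (n-i) * e ^ (n-i)))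
      = ((-1:F)^n * ((n.factorial : F))⁻¹) •
          (((-1:F)^i * (n.choose i : F)) • ((fallPow h a i * fallPow h (-b - (i:F)) (n-i)) * e ^ n)) := by
    intro i hi
    have hin : i ≤ n := Nat.lt_succ_iff.mp (Finset.mem_range.mp hi)
    rw [smul_mul_assoc, mul_smul_comm, smul_smul, smul_smul]
    congr 1
    · -- scalar part
      have h1 : ((-1:F)^(n-i)) * (-1:F)^i = (-1:F)^n := by
        rw [← pow_add, Nat.sub_add_cancel hin]
      have h2 : ((n.choose i : ℕ) : F) * (i.factorial : F) * ((n-i).factorial : F)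
          = (n.factorial : F) := by
        exact_mod_cast congrArg (Nat.cast (R := F)) (Nat.choose_mul_factorial_mul_factorial hin)
      have hf1 : (i.factorial : F) ≠ 0 := Nat.cast_ne_zero.mpr (Nat.factorial_ne_zero i)
      have hf2 : (((n-i).factorial : ℕ) : F) ≠ 0 := Nat.cast_ne_zero.mpr (Nat.factorial_ne_zero (n-i))
      have hf3 : ((n.factorial : ℕ) : F) ≠ 0 := Nat.cast_ne_zero.mpr (Nat.factorial_ne_zero n)
      have hx : ((-1:F)^i) * (-1:F)^i = 1 := by
        rw [← pow_add, ← two_mul, pow_mul, neg_one_sq, one_pow]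
      have h1' : ((-1:F)^(n-i)) = (-1:F)^n * (-1:F)^i := by
        rw [← h1, mul_assoc, hx, mul_one]
      have hC : ((n.choose i : ℕ) : F) ≠ 0 := Nat.cast_ne_zero.mpr (Nat.choose_pos hin).ne'
      rw [h1', ← h2]
      field_simp
    · -- body part
      rw [mul_assoc, ← mul_assoc (e ^ i), pow_mul_fallPow h e he (-b) i (n-i), mul_assoc,
        ← pow_add, Nat.add_sub_cancel' hin, ← mul_assoc]
  rw [Finset.sum_congr rfl hterm, ← Finset.smul_sum]
  have hpull : ∀ i ∈ Finset.range (n+1),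
      ((-1:F)^i * (n.choose i : F)) • ((fallPow h a i * fallPow h (-b - (i:F)) (n-i)) * e ^ n)
        = (((-1:F)^i * (n.choose i : F)) • (fallPow h a i * fallPow h (-b - (i:F)) (n-i))) * e ^ n :=
    fun i _ => (smul_mul_assoc _ _ _).symm
  rw [Finset.sum_congr rfl hpull, ← Finset.sum_mul, key_sum h e he a n b, smul_mul_assoc, one_mul,
    smul_smul]
  congr 1
  have hx : ((-1:F)^n) * (-1:F)^n = 1 := by
    rw [← pow_add, ← two_mul, pow_mul, neg_one_sq, one_pow]
  linear_combination ((n.factorial : F))⁻¹ * riseC (a+b) n * hx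

/-- `v_a · u_b = (1−et)^{−(a+b)} = Σ_{r≥0} (1/r!) (a+b)^{⟨r⟩} e^r t^r` in `A[[t]]`. -/
theorem vSer_mul_uSer {F A : Type*} [Field F] [CharZero F] [Ring A] [Algebra F A]
    (h e : A) (he : h * e - e * h = e) (a b : F) :
    vSer h e a * uSer h e b =
      PowerSeries.mk fun r => (((r.factorial : F))⁻¹ * riseC (a + b) r) • e ^ r := by
  unfold vSer uSer
  exact vSer_mul_uSer' h e he a b
end

section
/- For all integers a, k and every natural number ℓ, the integer ℓ! divides a^ℓ · ∏_{j=0}^{ℓ−1} (k + j·a). (This is the paper's Lemma 2.2, quoted from Grunspan.) -/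
/-- Counting lemma: if `q` is coprime to `a`, then at least `ℓ / q` of the
numbers `k, k + a, …, k + (ℓ-1)a` are divisible by `q`. -/
lemma count_dvd_arith (q : ℕ) (hq : 0 < q) (a k : ℤ) (hco : IsCoprime (q : ℤ) a) (ℓ : ℕ) :
    ℓ / q ≤ ((Finset.range ℓ).filter (fun j : ℕ => (q : ℤ) ∣ k + (j : ℤ) * a)).card := by
  obtain ⟨u, v, huv⟩ := hco
  -- a base solution j₀ < q with q ∣ k + j₀ * a
  set j₀ : ℕ := ((-k * v) % (q : ℤ)).toNat with hj₀
  have hqz : (0 : ℤ) < (q : ℤ) := by exact_mod_cast hq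
  have hmod_nonneg : 0 ≤ (-k * v) % (q : ℤ) := Int.emod_nonneg _ (ne_of_gt hqz)
  have hmod_lt : (-k * v) % (q : ℤ) < (q : ℤ) := Int.emod_lt_of_pos _ hqz
  have hj₀cast : (j₀ : ℤ) = (-k * v) % (q : ℤ) := Int.toNat_of_nonneg hmod_nonneg
  have hj₀q : j₀ < q := by omega
  have hbase : (q : ℤ) ∣ k + (j₀ : ℤ) * a := by
    have h1 : (q : ℤ) ∣ (j₀ : ℤ) - (-k * v) := by
      refine ⟨-((-k * v) / (q : ℤ)), ?_⟩
      have hmd := Int.emod_add_mul_ediv (-k * v) (q : ℤ)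
      rw [hj₀cast]; linarith
    -- k + j₀ * a = k + (j₀ - (-k*v)) * a + (-k*v)*a  and  k + (-k*v)*a = k*(1 - v*a) = k*u*q
    have h2 : k + (j₀ : ℤ) * a = ((j₀ : ℤ) - (-k * v)) * a + k * (u * (q : ℤ)) := by
      have : k * (u * (q : ℤ)) = k * (1 - v * a) := by
        have : u * (q : ℤ) = 1 - v * a := by linarith [huv]
        rw [this]
      rw [this]; ring
    rw [h2]
    exact dvd_add (Dvd.dvd.mul_right h1 a) ⟨k * u, by ring⟩
  -- inject range (ℓ / q) into the filtered set via t ↦ j₀ + t * q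
  have hinj : ∀ t ∈ Finset.range (ℓ / q), j₀ + t * q ∈
      (Finset.range ℓ).filter (fun j : ℕ => (q : ℤ) ∣ k + (j : ℤ) * a) := by
    intro t ht
    rw [Finset.mem_range] at ht
    have hle : (t + 1) * q ≤ (ℓ / q) * q := Nat.mul_le_mul_right q ht
    have hdm : (ℓ / q) * q ≤ ℓ := Nat.div_mul_le_self ℓ q
    have h3 : t * q + q ≤ ℓ := by
      calc t * q + q = (t + 1) * q := by ring
        _ ≤ (ℓ / q) * q := hle
        _ ≤ ℓ := hdm
    refine Finset.mem_filter.mpr ⟨Finset.mem_range.mpr (by omega), ?_⟩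
    have : k + ((j₀ + t * q : ℕ) : ℤ) * a = (k + (j₀ : ℤ) * a) + (t : ℤ) * a * (q : ℤ) := by
      push_cast; ring
    rw [this]
    exact dvd_add hbase ⟨(t : ℤ) * a, by ring⟩
  calc ℓ / q = (Finset.range (ℓ / q)).card := (Finset.card_range _).symm
    _ ≤ _ := Finset.card_le_card_of_injOn (fun t => j₀ + t * q) hinj
        (fun x _ y _ h => by
          simp only [] at h
          exact Nat.eq_of_mul_eq_mul_right hq (Nat.add_left_cancel h))

/-- For all integers `a`, `k` and every natural number `ℓ`, the integer `ℓ!` divides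
`a^ℓ · ∏_{j=0}^{ℓ−1} (k + j·a)`. -/
theorem factorial_dvd_pow_mul_prod (a k : ℤ) (ℓ : ℕ) :
    (ℓ.factorial : ℤ) ∣ a ^ ℓ * ∏ j ∈ Finset.range ℓ, (k + (j : ℤ) * a) := by
  rcases eq_or_ne (a ^ ℓ * ∏ j ∈ Finset.range ℓ, (k + (j : ℤ) * a)) 0 with h0 | h0
  · rw [h0]; exact dvd_zero _
  have ha : a ≠ 0 ∨ ℓ = 0 := by
    rcases eq_or_ne ℓ 0 with h | h
    · exact Or.inr h
    · left; intro haz; apply h0; rw [haz, zero_pow h, zero_mul]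
  rcases eq_or_ne ℓ 0 with hℓ0 | hℓ0
  · simp [hℓ0]
  have haz : a ≠ 0 := ha.resolve_right hℓ0
  have hfac : ∀ j ∈ Finset.range ℓ, k + (j : ℤ) * a ≠ 0 := by
    intro j hj hzero
    apply h0
    rw [Finset.prod_eq_zero hj hzero, mul_zero]
  -- pass to natural numbers via natAbs
  rw [Int.natCast_dvd]
  have hprodAbs : (∏ j ∈ Finset.range ℓ, (k + (j : ℤ) * a)).natAbs
      = ∏ j ∈ Finset.range ℓ, (k + (j : ℤ) * a).natAbs :=
    map_prod Int.natAbsHom _ _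
  rw [Int.natAbs_mul, Int.natAbs_pow, hprodAbs]
  have hprodne : (∏ j ∈ Finset.range ℓ, (k + (j : ℤ) * a).natAbs) ≠ 0 := by
    rw [Finset.prod_ne_zero_iff]
    intro j hj
    simpa [Int.natAbs_eq_zero] using hfac j hj
  have hMne : a.natAbs ^ ℓ * ∏ j ∈ Finset.range ℓ, (k + (j : ℤ) * a).natAbs ≠ 0 :=
    mul_ne_zero (pow_ne_zero _ (by simpa using haz)) hprodne
  rw [← Nat.factorization_le_iff_dvd (Nat.factorial_ne_zero ℓ) hMne]
  rw [Finsupp.le_iff]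
  intro p hp
  have hpp : p.Prime := Nat.prime_of_mem_primeFactors (by
    rwa [Nat.support_factorization] at hp)
  haveI : Fact p.Prime := ⟨hpp⟩
  -- compute factorizations
  rw [Nat.factorization_mul (pow_ne_zero _ (by simpa using haz)) hprodne,
    Nat.factorization_pow, Nat.factorization_prod
      (fun j hj => by simpa [Int.natAbs_eq_zero] using hfac j hj)]
  simp only [Finsupp.coe_add, Finsupp.coe_smul, Pi.add_apply, Pi.smul_apply,
    Finset.sum_apply', smul_eq_mul]
  -- Legendre's formula
  have hlog : Nat.log p ℓ < ℓ + 1 := Nat.lt_succ_of_le (Nat.log_le_self p ℓ)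
  have hleg : (ℓ.factorial).factorization p = ∑ i ∈ Finset.Ico 1 (ℓ + 1), ℓ / p ^ i := by
    rw [Nat.factorization_def _ hpp, padicValNat_factorial hlog]
  rw [hleg]
  by_cases hpa : p ∣ a.natAbs
  · -- p divides a : the a^ℓ part already supplies enough
    have h1 : 1 ≤ a.natAbs.factorization p :=
      (Nat.Prime.dvd_iff_one_le_factorization hpp (by simpa using haz)).mp hpa
    have hvle : ∑ i ∈ Finset.Ico 1 (ℓ + 1), ℓ / p ^ i ≤ ℓ := by
      have := sub_one_mul_padicValNat_factorial (p := p) ℓ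
      have hv : padicValNat p ℓ.factorial = ∑ i ∈ Finset.Ico 1 (ℓ + 1), ℓ / p ^ i :=
        padicValNat_factorial hlog
      have h2 : 2 ≤ p := hpp.two_le
      have hdig : (p - 1) * padicValNat p ℓ.factorial ≤ ℓ := by omega
      calc ∑ i ∈ Finset.Ico 1 (ℓ + 1), ℓ / p ^ i = padicValNat p ℓ.factorial := hv.symm
        _ ≤ (p - 1) * padicValNat p ℓ.factorial := Nat.le_mul_of_pos_left _ (by omega)
        _ ≤ ℓ := hdig
    calc ∑ i ∈ Finset.Ico 1 (ℓ + 1), ℓ / p ^ i ≤ ℓ := hvle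
      _ ≤ ℓ * a.natAbs.factorization p := Nat.le_mul_of_pos_right _ (by omega)
      _ ≤ _ := Nat.le_add_right _ _
  · -- p coprime to a : count multiplicities in the product
    have hco : ∀ i : ℕ, IsCoprime ((p ^ i : ℕ) : ℤ) a := by
      intro i
      rw [Int.isCoprime_iff_gcd_eq_one]
      have : Nat.Coprime (p ^ i) a.natAbs :=
        Nat.Coprime.pow_left i ((Nat.Prime.coprime_iff_not_dvd hpp).mpr hpa)
      simpa [Int.gcd, Int.natAbs_pow] using this
    have key : ∑ i ∈ Finset.Ico 1 (ℓ + 1), ℓ / p ^ i ≤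
        ∑ j ∈ Finset.range ℓ, (k + (j : ℤ) * a).natAbs.factorization p := by
      have step1 : ∀ i ∈ Finset.Ico 1 (ℓ + 1), ℓ / p ^ i ≤
          ((Finset.range ℓ).filter (fun j : ℕ => ((p ^ i : ℕ) : ℤ) ∣ k + (j : ℤ) * a)).card :=
        fun i _ => count_dvd_arith (p ^ i) (pow_pos hpp.pos i) a k (hco i) ℓ
      have step2 : ∑ i ∈ Finset.Ico 1 (ℓ + 1),
          ((Finset.range ℓ).filter (fun j : ℕ => ((p ^ i : ℕ) : ℤ) ∣ k + (j : ℤ) * a)).card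
          = ∑ j ∈ Finset.range ℓ,
          ((Finset.Ico 1 (ℓ + 1)).filter (fun i : ℕ => ((p ^ i : ℕ) : ℤ) ∣ k + (j : ℤ) * a)).card := by
        simp only [Finset.card_filter]
        exact Finset.sum_comm
      have step3 : ∀ j ∈ Finset.range ℓ,
          ((Finset.Ico 1 (ℓ + 1)).filter (fun i : ℕ => ((p ^ i : ℕ) : ℤ) ∣ k + (j : ℤ) * a)).card
          ≤ (k + (j : ℤ) * a).natAbs.factorization p := by
        intro j hj
        have hne : (k + (j : ℤ) * a).natAbs ≠ 0 := by
          simpa [Int.natAbs_eq_zero] using hfac j hj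
        have hsub : ((Finset.Ico 1 (ℓ + 1)).filter
            (fun i : ℕ => ((p ^ i : ℕ) : ℤ) ∣ k + (j : ℤ) * a)) ⊆
            Finset.Icc 1 ((k + (j : ℤ) * a).natAbs.factorization p) := by
          intro i hi
          rw [Finset.mem_filter, Finset.mem_Ico] at hi
          obtain ⟨⟨hi1, _⟩, hdvd⟩ := hi
          rw [Int.natCast_dvd] at hdvd
          have : i ≤ (k + (j : ℤ) * a).natAbs.factorization p :=
            (Nat.Prime.pow_dvd_iff_le_factorization hpp hne).mp hdvd
          exact Finset.mem_Icc.mpr ⟨hi1, this⟩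
        calc _ ≤ (Finset.Icc 1 ((k + (j : ℤ) * a).natAbs.factorization p)).card :=
              Finset.card_le_card hsub
          _ = (k + (j : ℤ) * a).natAbs.factorization p := by
              rw [Nat.card_Icc]; omega
      calc ∑ i ∈ Finset.Ico 1 (ℓ + 1), ℓ / p ^ i
          ≤ ∑ i ∈ Finset.Ico 1 (ℓ + 1),
            ((Finset.range ℓ).filter (fun j : ℕ => ((p ^ i : ℕ) : ℤ) ∣ k + (j : ℤ) * a)).card :=
            Finset.sum_le_sum step1
        _ = _ := step2
        _ ≤ _ := Finset.sum_le_sum step3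
    calc ∑ i ∈ Finset.Ico 1 (ℓ + 1), ℓ / p ^ i
        ≤ ∑ j ∈ Finset.range ℓ, (k + (j : ℤ) * a).natAbs.factorization p := key
      _ ≤ _ := Nat.le_add_left _ _
end

section
/- Suppose additionally y ∈ A and λ ∈ F satisfy hy − yh = λy. Then for every a ∈ F and every s ∈ ℕ, y^s · u_a = u_{a+sλ} · Σ_{ℓ≥0} d^{(ℓ)}(y^s) · h_{1−a}^{⟨ℓ⟩} · t^ℓ in A[[t]]. (This is identity (3.10) of the paper's Lemma 3.3, proved there for y = D_K(x^α) ∈ U(𝐊) with λ = α_k − α_{−k}; only the stated commutation relations are used.) -/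
/-- Rising factorial `x_a^{⟨m⟩} := (x+a)(x+a+1)⋯(x+a+m-1)` in an `F`-algebra `A`. -/
def risePow {F A : Type*} [Field F] [Ring A] [Algebra F A] (x : A) (a : F) : ℕ → A
  | 0 => 1
  | m + 1 => risePow x a m * (x + algebraMap F A (a + (m : F)))

/-- The divided power `d^{(ℓ)} = (1/ℓ!)(ad e)^ℓ` of the inner derivation `ad e`. -/
def dPow (F : Type*) {A : Type*} [Field F] [Ring A] [Algebra F A]
    (e : A) (ℓ : ℕ) (x : A) : A :=
  ((ℓ.factorial : F))⁻¹ • ((fun z => e * z - z * e)^[ℓ] x)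

/-!
Both sides, as power series in `t`, solve the linear equation `f' = -f · e (h + 1 - a)` and
have constant term `y ^ s`; in characteristic zero such a solution is determined by its constant
term. For `u_c` the equation is just the recurrence between consecutive coefficients. On the
right it comes from the Leibniz rule: `u_{a+sλ}` solves `f' = -f Q` and the series
`g = Σ d^{(ℓ)}(y^s) h_{1-a}^{⟨ℓ⟩} t^ℓ` solves `g' = Q g - g P`, where `Q = e (h + 1 - a - sλ)` and
`P = e (h + 1 - a)`, because `y ^ s` has `ad h`-weight `sλ` and `ad e` raises weights by one.
-/

open PowerSeries

namespace PowerSeries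

variable {A : Type*} [Ring A]

/-- The equation `f' = Q f - f P`, read coefficientwise. -/
def SolvesSylvesterEq (Q P : A) (f : A⟦X⟧) : Prop :=
  ∀ n : ℕ, (n + 1) • coeff (n + 1) f = Q * coeff n f - coeff n f * P

theorem solvesSylvesterEq_C (z : A) : SolvesSylvesterEq 0 0 (C z) := by
  intro n
  simp [coeff_C]

open Finset in
theorem SolvesSylvesterEq.mul {R Q P : A} {f g : A⟦X⟧} (hf : SolvesSylvesterEq R Q f)
    (hg : SolvesSylvesterEq Q P g) : SolvesSylvesterEq R P (f * g) := by
  intro n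
  have hsplit : (n + 1) • coeff (n + 1) (f * g) =
      ∑ p ∈ antidiagonal (n + 1), (p.1 • coeff p.1 f) * coeff p.2 g +
        ∑ p ∈ antidiagonal (n + 1), coeff p.1 f * (p.2 • coeff p.2 g) := by
    rw [coeff_mul, Finset.smul_sum, ← Finset.sum_add_distrib]
    refine Finset.sum_congr rfl fun p hp => ?_
    rw [← HasAntidiagonal.mem_antidiagonal.mp hp, add_smul, smul_mul_assoc, mul_smul_comm]
  rw [hsplit, Finset.Nat.sum_antidiagonal_succ, Finset.Nat.sum_antidiagonal_succ']
  unfold SolvesSylvesterEq at hf hg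
  simp only [zero_smul, zero_mul, mul_zero, zero_add, hf, hg]
  rw [coeff_mul, Finset.mul_sum, Finset.sum_mul, ← Finset.sum_sub_distrib,
    ← Finset.sum_add_distrib]
  refine Finset.sum_congr rfl fun p _ => ?_
  noncomm_ring

theorem SolvesSylvesterEq.ext [IsAddTorsionFree A] {Q P : A} {f g : A⟦X⟧}
    (hf : SolvesSylvesterEq Q P f) (hg : SolvesSylvesterEq Q P g)
    (h₀ : coeff 0 f = coeff 0 g) : f = g := by
  ext n
  induction n with
  | zero => exact h₀
  | succ n ih => exact nsmul_right_injective n.succ_ne_zero (by simp only [hf n, hg n, ih])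

end PowerSeries

section WeightVectors

variable {F A : Type*} [Field F] [Ring A] [Algebra F A]

def IsWeightVector (h : A) (c : F) (x : A) : Prop :=
  h * x - x * h = c • x

namespace IsWeightVector

variable {h e x y : A} {c d : F}

theorem mul (hx : IsWeightVector h c x) (hy : IsWeightVector h d y) :
    IsWeightVector h (c + d) (x * y) :=
  calc h * (x * y) - x * y * h = (h * x - x * h) * y + x * (h * y - y * h) := by noncomm_ring
    _ = (c + d) • (x * y) := by rw [hx, hy, smul_mul_assoc, mul_smul_comm, add_smul]

theorem pow (hx : IsWeightVector h c x) : ∀ n : ℕ, IsWeightVector h (n * c) (x ^ n)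
  | 0 => by simp [IsWeightVector]
  | n + 1 => by
    rw [pow_succ, Nat.cast_succ, add_one_mul]
    exact (hx.pow n).mul hx

theorem sub (hx : IsWeightVector h c x) (hy : IsWeightVector h c y) :
    IsWeightVector h c (x - y) := by
  unfold IsWeightVector at *
  rw [smul_sub, ← hx, ← hy]
  noncomm_ring

theorem smul (hx : IsWeightVector h c x) (r : F) : IsWeightVector h c (r • x) := by
  unfold IsWeightVector at *
  rw [mul_smul_comm, smul_mul_assoc, ← smul_sub, hx, smul_comm]

theorem commutator (he : IsWeightVector h (1 : F) e) (hx : IsWeightVector h c x) :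
    IsWeightVector h (c + 1) (e * x - x * e) := by
  have hex := he.mul hx
  rw [add_comm] at hex
  exact hex.sub (hx.mul he)

theorem iterate_commutator (he : IsWeightVector h (1 : F) e) (hx : IsWeightVector h c x) :
    ∀ ℓ : ℕ, IsWeightVector h (c + ℓ) ((fun z => e * z - z * e)^[ℓ] x)
  | 0 => by simpa using hx
  | ℓ + 1 => by
    rw [Function.iterate_succ_apply', Nat.cast_succ, ← add_assoc]
    exact he.commutator (iterate_commutator he hx ℓ)

theorem add_algebraMap_mul (hx : IsWeightVector h c x) (d : F) :
    (h + algebraMap F A d) * x = x * (h + algebraMap F A (d + c)) := by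
  rw [map_add, add_mul, mul_add, mul_add, sub_eq_iff_eq_add.mp hx, Algebra.smul_def,
    ← Algebra.commutes d x, ← Algebra.commutes c x]
  abel

end IsWeightVector

end WeightVectors

section Factorials

variable {F A : Type*} [Field F] [Ring A] [Algebra F A]

theorem risePow_succ (x : A) (b : F) (ℓ : ℕ) :
    risePow x b (ℓ + 1) = risePow x b ℓ * (x + algebraMap F A (b + ℓ)) :=
  rfl

theorem risePow_succ' (x : A) (b : F) :
    ∀ ℓ : ℕ, risePow x b (ℓ + 1) = (x + algebraMap F A b) * risePow x (b + 1) ℓ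
  | 0 => by simp [risePow]
  | ℓ + 1 => by
    rw [risePow_succ, risePow_succ' x b ℓ, risePow_succ, mul_assoc, Nat.cast_succ,
      add_comm (ℓ : F), add_assoc]

theorem commute_add_algebraMap_risePow (x : A) (d b : F) :
    ∀ ℓ : ℕ, Commute (x + algebraMap F A d) (risePow x b ℓ)
  | 0 => Commute.one_right _
  | ℓ + 1 => (commute_add_algebraMap_risePow x d b ℓ).mul_right <|
    ((Commute.refl x).add_right (Algebra.commute_algebraMap_right _ x)).add_left
      (Algebra.commute_algebraMap_left _ _)

theorem IsWeightVector.risePow_mul {h x : A} {c : F} (hx : IsWeightVector h c x) (b : F) :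
    ∀ ℓ : ℕ, risePow h b ℓ * x = x * risePow h (b + c) ℓ
  | 0 => by simp [risePow]
  | ℓ + 1 => by
    rw [risePow_succ, mul_assoc, hx.add_algebraMap_mul, ← mul_assoc, hx.risePow_mul b ℓ,
      mul_assoc, add_right_comm, ← risePow_succ]

theorem add_one_smul_dPow_succ [CharZero F] (e z : A) (ℓ : ℕ) :
    ((ℓ : F) + 1) • dPow F e (ℓ + 1) z = e * dPow F e ℓ z - dPow F e ℓ z * e := by
  unfold dPow
  rw [Function.iterate_succ_apply', smul_smul, mul_smul_comm, smul_mul_assoc, ← smul_sub]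
  congr 1
  rw [Nat.factorial_succ]
  push_cast
  field_simp

theorem fallPow_succ_mul_pow_succ {h e : A} (he : IsWeightVector h (1 : F) e) (c : F) (j : ℕ) :
    fallPow h (-c) (j + 1) * e ^ (j + 1) =
      fallPow h (-c) j * e ^ j * (e * (h + algebraMap F A (1 - c))) := by
  have hshift : -c - j + ((j + 1 : ℕ) : F) * 1 = 1 - c := by push_cast; ring
  rw [fallPow, mul_assoc, (he.pow (j + 1)).add_algebraMap_mul, hshift, pow_succ, mul_assoc,
    mul_assoc]

theorem isWeightVector_dPow {h e z : A} {μ : F} (he : IsWeightVector h (1 : F) e)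
    (hz : IsWeightVector h μ z) (ℓ : ℕ) : IsWeightVector h (μ + ℓ) (dPow F e ℓ z) :=
  (he.iterate_commutator hz ℓ).smul _

end Factorials

section SylvesterEquations

variable {F A : Type*} [Field F] [CharZero F] [Ring A] [Algebra F A] {h e : A}

theorem solvesSylvesterEq_uSer (he : IsWeightVector h (1 : F) e) (c : F) :
    SolvesSylvesterEq 0 (e * (h + algebraMap F A (1 - c))) (uSer h e c) := by
  intro j
  have hscalar : ((j : F) + 1) * ((-1) ^ (j + 1) / ((j + 1).factorial : F)) =
      -((-1) ^ j / (j.factorial : F)) := by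
    rw [Nat.factorial_succ]
    push_cast
    field_simp
    ring
  rw [← Nat.cast_smul_eq_nsmul F]
  simp only [uSer, coeff_mk, zero_mul, zero_sub]
  rw [fallPow_succ_mul_pow_succ he, smul_smul, Nat.cast_succ, hscalar, neg_smul, smul_mul_assoc,
    mul_assoc]

theorem solvesSylvesterEq_dPow_mul_risePow (he : IsWeightVector h (1 : F) e) {z : A} {μ : F}
    (hz : IsWeightVector h μ z) (a : F) :
    SolvesSylvesterEq (e * (h + algebraMap F A (1 - (a + μ)))) (e * (h + algebraMap F A (1 - a)))
      (PowerSeries.mk fun ℓ => dPow F e ℓ z * risePow h (1 - a) ℓ) := by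
  intro ℓ
  simp only [coeff_mk]
  set zℓ := dPow F e ℓ z
  have hzℓ := (isWeightVector_dPow he hz ℓ).add_algebraMap_mul (1 - (a + μ))
  rw [show 1 - (a + μ) + (μ + ℓ) = 1 - a + ℓ by ring] at hzℓ
  have hleft : e * (h + algebraMap F A (1 - (a + μ))) * (zℓ * risePow h (1 - a) ℓ) =
      e * zℓ * risePow h (1 - a) (ℓ + 1) := by
    rw [mul_assoc, ← mul_assoc _ zℓ, hzℓ, mul_assoc zℓ,
      (commute_add_algebraMap_risePow h _ _ ℓ).eq, risePow_succ, mul_assoc]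
  have hright : zℓ * risePow h (1 - a) ℓ * (e * (h + algebraMap F A (1 - a))) =
      zℓ * e * risePow h (1 - a) (ℓ + 1) := by
    rw [mul_assoc, ← mul_assoc _ e, he.risePow_mul, mul_assoc e,
      ← (commute_add_algebraMap_risePow h _ _ ℓ).eq, risePow_succ', mul_assoc zℓ]
  rw [hleft, hright, ← sub_mul, ← add_one_smul_dPow_succ, smul_mul_assoc,
    ← Nat.cast_smul_eq_nsmul F, Nat.cast_succ]

end SylvesterEquations

/-- If `he − eh = e` and `hy − yh = λ·y`, then
`y^s · u_a = u_{a+sλ} · Σ_{ℓ≥0} d^{(ℓ)}(y^s) h_{1−a}^{⟨ℓ⟩} t^ℓ` in `A[[t]]`. -/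
theorem pow_mul_uSer {F A : Type*} [Field F] [CharZero F] [Ring A] [Algebra F A]
    (h e : A) (he : h * e - e * h = e)
    (y : A) (lam : F) (hy : h * y - y * h = lam • y) (a : F) (s : ℕ) :
    PowerSeries.C (y ^ s) * uSer h e a =
      uSer h e (a + (s : F) * lam) *
        PowerSeries.mk (fun ℓ => dPow F e ℓ (y ^ s) * risePow h (1 - a) ℓ) := by
  have he' : IsWeightVector h (1 : F) e := by rwa [IsWeightVector, one_smul]
  have hys : IsWeightVector h ((s : F) * lam) (y ^ s) := IsWeightVector.pow hy s
  have : IsAddTorsionFree A := .of_isTorsionFree F A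
  refine SolvesSylvesterEq.ext ((solvesSylvesterEq_C _).mul (solvesSylvesterEq_uSer he' a))
    ((solvesSylvesterEq_uSer he' _).mul (solvesSylvesterEq_dPow_mul_risePow he' hys a)) ?_
  simp [uSer, dPow, fallPow, risePow, coeff_mul]
end
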